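/- For every integer n ≥ 5, (n−4)·rcr(K_n) ≥ n·rcr(K_{n−1}), where rcr denotes the rectilinear crossing number and K_n the complete graph on n vertices. -/

import Mathlib

/-- A rectilinear drawing: an injective map of the vertices into the plane
with no three vertex images collinear. -/
def IsRectilinearDrawing {V : Type*} (f : V → ℝ × ℝ) : Prop :=
  Function.Injective f ∧
    ∀ a b c : V, a ≠ b → a ≠ c → b ≠ c →
      ¬ Collinear ℝ ({f a, f b, f c} : Set (ℝ × ℝ))

/-- The open straight-line segment joining the images of the endpoints of an edge. -/
def edgeSeg {V : Type*} (f : V → ℝ × ℝ) : Sym2 V → Set (ℝ × ℝ) :=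
  Sym2.lift ⟨fun a b => openSegment ℝ (f a) (f b), fun a b => openSegment_symm ℝ (f a) (f b)⟩

/-- Two edges (with disjoint vertex sets) cross if their open segments meet. -/
def EdgesCross {V : Type*} (f : V → ℝ × ℝ) (e₁ e₂ : Sym2 V) : Prop :=
  (∀ v, v ∈ e₁ → v ∉ e₂) ∧ (edgeSeg f e₁ ∩ edgeSeg f e₂).Nonempty

lemma edgesCross_symm {V : Type*} (f : V → ℝ × ℝ) : Symmetric (EdgesCross f) :=
  fun _ _ h => ⟨fun v hv hv' => h.1 v hv' hv, by rw [Set.inter_comm]; exact h.2⟩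

/-- The crossing number of a drawing: the number of unordered pairs of edges of `G`
that cross in the drawing. -/
noncomputable def crossingNumber {V : Type*} (G : SimpleGraph V) (f : V → ℝ × ℝ) : ℕ :=
  Set.ncard {p : Sym2 (Sym2 V) |
    (∀ e ∈ p, e ∈ G.edgeSet) ∧ p ∈ Sym2.fromRel ⟨edgesCross_symm f⟩}

/-- The rectilinear crossing number of a graph. -/
noncomputable def rcr {V : Type*} (G : SimpleGraph V) : ℕ :=
  sInf {k | ∃ f : V → ℝ × ℝ, IsRectilinearDrawing f ∧ crossingNumber G f = k}

/-- The complete balanced `r`-partite graph with `r` parts of size `m`. -/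
def completeBalanced (r m : ℕ) : SimpleGraph (Fin r × Fin m) :=
  SimpleGraph.comap Prod.fst ⊤

instance (r m : ℕ) : DecidableRel (completeBalanced r m).Adj :=
  fun u v => inferInstanceAs (Decidable (u.1 ≠ v.1))

/-- The balanced layered graph with `r` layers of size `m`: all edges between
consecutive layers. -/
def layeredGraph (r m : ℕ) : SimpleGraph (Fin r × Fin m) where
  Adj u v := u.1.1 + 1 = v.1.1 ∨ v.1.1 + 1 = u.1.1
  symm := ⟨fun _ _ h => h.symm⟩
  loopless := ⟨fun u h => by cases h <;> omega⟩

instance (r m : ℕ) : DecidableRel (layeredGraph r m).Adj :=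
  fun u v => inferInstanceAs (Decidable (u.1.1 + 1 = v.1.1 ∨ v.1.1 + 1 = u.1.1))

/-- The `s`-fold blow-up of a graph `G`. -/
def blowup {V : Type*} (G : SimpleGraph V) (s : ℕ) : SimpleGraph (V × Fin s) :=
  SimpleGraph.comap Prod.fst G

/-!
Take a drawing of `K_n` with `rcr K_n` crossings. Deleting a vertex `v` leaves a drawing of
`K_{n-1}`, so `rcr K_{n-1}` is at most the number of crossings avoiding `v`. Summing over the
`n` vertices counts every crossing once for each of the `n - 4` vertices outside its two edges.
-/

open Finset

section RectilinearDrawing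

variable {V W : Type*}

lemma isRectilinearDrawing_parabola {g : V → ℝ} (hg : Function.Injective g) :
    IsRectilinearDrawing fun v => (g v, g v ^ 2) := by
  refine ⟨fun u v h => hg (congrArg Prod.fst h), fun a b c hab hac hbc hcol => ?_⟩
  obtain ⟨w, hw⟩ := (collinear_iff_of_mem (Set.mem_insert _ _)).1 hcol
  obtain ⟨r₁, e₁⟩ := hw (g b, g b ^ 2) (by simp)
  obtain ⟨r₂, e₂⟩ := hw (g c, g c ^ 2) (by simp)
  simp only [vadd_eq_add, Prod.ext_iff, Prod.fst_add, Prod.snd_add, Prod.smul_fst,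
    Prod.smul_snd, smul_eq_mul] at e₁ e₂
  -- `(b - a)(c² - a²) = (c - a)(b² - a²)` since both are `r₁ r₂ w₁ w₂`
  have : (g b - g a) * (g c - g a) * (g c - g b) = 0 := by
    linear_combination (g b - g a) * e₂.2 - (g c - g a) * e₁.2 + w.2 * r₂ * e₁.1 -
      w.2 * r₁ * e₂.1
  exact mul_ne_zero (mul_ne_zero (sub_ne_zero.2 (hg.ne hab.symm))
    (sub_ne_zero.2 (hg.ne hac.symm))) (sub_ne_zero.2 (hg.ne hbc.symm)) this

lemma exists_isRectilinearDrawing (V : Type*) [Countable V] :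
    ∃ f : V → ℝ × ℝ, IsRectilinearDrawing f :=
  let ⟨g, hg⟩ := exists_injective_nat V
  ⟨_, isRectilinearDrawing_parabola (Nat.cast_injective.comp hg)⟩

lemma IsRectilinearDrawing.comp {f : V → ℝ × ℝ} {g : W → V} (hf : IsRectilinearDrawing f)
    (hg : Function.Injective g) : IsRectilinearDrawing (f ∘ g) :=
  ⟨hf.1.comp hg, fun a b c hab hac hbc => hf.2 _ _ _ (hg.ne hab) (hg.ne hac) (hg.ne hbc)⟩

lemma edgeSeg_comp (f : V → ℝ × ℝ) (g : W → V) (e : Sym2 W) :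
    edgeSeg (f ∘ g) e = edgeSeg f (e.map g) := by
  induction e using Sym2.inductionOn with
  | hf a b => rfl

lemma EdgesCross.map {f : V → ℝ × ℝ} {g : W → V} (hg : Function.Injective g) {e₁ e₂ : Sym2 W}
    (h : EdgesCross (f ∘ g) e₁ e₂) : EdgesCross f (e₁.map g) (e₂.map g) := by
  refine ⟨fun v hv₁ hv₂ => ?_, by simpa only [edgeSeg_comp] using h.2⟩
  obtain ⟨a, ha, rfl⟩ := Sym2.mem_map.1 hv₁
  obtain ⟨b, hb, hba⟩ := Sym2.mem_map.1 hv₂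
  exact h.1 a ha (hg hba ▸ hb)

def crossingPairs (G : SimpleGraph V) (f : V → ℝ × ℝ) : Set (Sym2 (Sym2 V)) :=
  {p | (∀ e ∈ p, e ∈ G.edgeSet) ∧ p ∈ Sym2.fromRel ⟨edgesCross_symm f⟩}

lemma crossingNumber_eq_ncard (G : SimpleGraph V) (f : V → ℝ × ℝ) :
    crossingNumber G f = (crossingPairs G f).ncard :=
  rfl

lemma mk_mem_crossingPairs {G : SimpleGraph V} {f : V → ℝ × ℝ} {e₁ e₂ : Sym2 V} :
    s(e₁, e₂) ∈ crossingPairs G f ↔ e₁ ∈ G.edgeSet ∧ e₂ ∈ G.edgeSet ∧ EdgesCross f e₁ e₂ := by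
  simp only [crossingPairs, Set.mem_ofPred_eq, Sym2.forall_mem_pair, Sym2.fromRel_prop,
    and_assoc]

lemma rcr_le_crossingNumber (G : SimpleGraph V) {f : V → ℝ × ℝ} (hf : IsRectilinearDrawing f) :
    rcr G ≤ crossingNumber G f :=
  Nat.sInf_le ⟨f, hf, rfl⟩

lemma exists_crossingNumber_eq_rcr [Countable V] (G : SimpleGraph V) :
    ∃ f : V → ℝ × ℝ, IsRectilinearDrawing f ∧ crossingNumber G f = rcr G := by
  obtain ⟨f, hf⟩ := exists_isRectilinearDrawing V
  exact Nat.sInf_mem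
    (s := {k | ∃ f : V → ℝ × ℝ, IsRectilinearDrawing f ∧ crossingNumber G f = k}) ⟨_, f, hf, rfl⟩

lemma crossingNumber_comp_le [Finite V] (f : V → ℝ × ℝ) {H : SimpleGraph W}
    {G : SimpleGraph V} (g : H ↪g G) {v : V} (hv : v ∉ Set.range g) :
    crossingNumber H (f ∘ g) ≤ {p ∈ crossingPairs G f | ∀ e ∈ p, v ∉ e}.ncard := by
  have hinj : Function.Injective (Sym2.map (Sym2.map g)) :=
    Sym2.map.injective (Sym2.map.injective g.injective)
  rw [crossingNumber_eq_ncard, ← Set.ncard_image_of_injective _ hinj]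
  refine Set.ncard_le_ncard ?_ (Set.toFinite _)
  rintro _ ⟨p, hp, rfl⟩
  induction p using Sym2.inductionOn with
  | hf e₁ e₂ =>
    obtain ⟨he₁, he₂, hcross⟩ := mk_mem_crossingPairs.1 hp
    refine ⟨mk_mem_crossingPairs.2 ⟨g.toHom.map_mem_edgeSet he₁, g.toHom.map_mem_edgeSet he₂,
      hcross.map g.injective⟩, ?_⟩
    simp only [Sym2.map_mk, Sym2.forall_mem_pair, Sym2.mem_map]
    exact ⟨fun ⟨a, _, ha⟩ => hv ⟨a, ha⟩, fun ⟨a, _, ha⟩ => hv ⟨a, ha⟩⟩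

lemma Sym2.card_filter_notMem_and_notMem [Fintype V] [DecidableEq V] {e₁ e₂ : Sym2 V}
    (h₁ : ¬e₁.IsDiag) (h₂ : ¬e₂.IsDiag) (h : ∀ v ∈ e₁, v ∉ e₂) :
    #{v | v ∉ e₁ ∧ v ∉ e₂} = Fintype.card V - 4 := by
  have hdisj : Disjoint e₁.toFinset e₂.toFinset :=
    Finset.disjoint_left.2 fun v hv₁ hv₂ =>
      h v (Sym2.mem_toFinset.1 hv₁) (Sym2.mem_toFinset.1 hv₂)
  have hcompl : ({v | v ∉ e₁ ∧ v ∉ e₂} : Finset V) = (e₁.toFinset ∪ e₂.toFinset)ᶜ := by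
    ext v
    simp [Sym2.mem_toFinset]
  rw [hcompl, card_compl, card_union_of_disjoint hdisj, Sym2.card_toFinset_of_not_isDiag _ h₁,
    Sym2.card_toFinset_of_not_isDiag _ h₂]

lemma card_sub_four_mul_crossingNumber [Fintype V] (G : SimpleGraph V) (f : V → ℝ × ℝ) :
    (Fintype.card V - 4) * crossingNumber G f =
      ∑ v, {p ∈ crossingPairs G f | ∀ e ∈ p, v ∉ e}.ncard := by
  classical
  set X := (Set.toFinite (crossingPairs G f)).toFinset
  have hX : ∀ v : V,
      {p ∈ crossingPairs G f | ∀ e ∈ p, v ∉ e}.ncard = #{p ∈ X | ∀ e ∈ p, v ∉ e} := by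
    intro v
    rw [← Set.ncard_coe_finset]
    congr 1
    ext p
    simp [X]
  have hcount : ∀ p ∈ X, #{v | ∀ e ∈ p, v ∉ e} = Fintype.card V - 4 := by
    intro p hp
    induction p using Sym2.inductionOn with
    | hf e₁ e₂ =>
      obtain ⟨he₁, he₂, hcross⟩ := mk_mem_crossingPairs.1 ((Set.Finite.mem_toFinset _).1 hp)
      simp only [Sym2.forall_mem_pair]
      exact Sym2.card_filter_notMem_and_notMem (G.not_isDiag_of_mem_edgeSet he₁)
        (G.not_isDiag_of_mem_edgeSet he₂) hcross.1
  calc (Fintype.card V - 4) * crossingNumber G f = ∑ p ∈ X, #{v | ∀ e ∈ p, v ∉ e} := by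
        rw [sum_congr rfl hcount, sum_const, smul_eq_mul, mul_comm, crossingNumber_eq_ncard,
          Set.ncard_eq_toFinset_card]
    _ = ∑ v, {p ∈ crossingPairs G f | ∀ e ∈ p, v ∉ e}.ncard := by
        simp only [hX, card_filter]
        exact sum_comm

end RectilinearDrawing

theorem stmt1_general (n : ℕ) :
    n * rcr (⊤ : SimpleGraph (Fin (n - 1))) ≤ (n - 4) * rcr (⊤ : SimpleGraph (Fin n)) := by
  cases n with
  | zero => simp
  | succ m =>
    obtain ⟨f, hf, hf_opt⟩ := exists_crossingNumber_eq_rcr (⊤ : SimpleGraph (Fin (m + 1)))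
    calc (m + 1) * rcr (⊤ : SimpleGraph (Fin (m + 1 - 1)))
        = ∑ _v : Fin (m + 1), rcr (⊤ : SimpleGraph (Fin m)) := by simp
      _ ≤ ∑ v : Fin (m + 1), {p ∈ crossingPairs ⊤ f | ∀ e ∈ p, v ∉ e}.ncard :=
        sum_le_sum fun v _ =>
          (rcr_le_crossingNumber _ (hf.comp (Fin.succAbove_right_injective (p := v)))).trans
            (crossingNumber_comp_le f (SimpleGraph.Embedding.completeGraph v.succAboveEmb)
              (by simp))
      _ = (m + 1 - 4) * rcr (⊤ : SimpleGraph (Fin (m + 1))) := by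
        rw [← hf_opt, ← card_sub_four_mul_crossingNumber, Fintype.card_fin]

/-- For every integer `n ≥ 5`, `(n − 4)·rcr(K_n) ≥ n·rcr(K_{n−1})`. -/
theorem stmt1 (n : ℕ) (hn : 5 ≤ n) :
    n * rcr (⊤ : SimpleGraph (Fin (n - 1))) ≤ (n - 4) * rcr (⊤ : SimpleGraph (Fin n)) :=
  stmt1_general n
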